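/- Box parametrization: let Q = (q₁ > q₂ > ... > q_k) be super-distinct, and set δ₁ = q_k and δ_i = q_{k−i+1} − q_{k−i+2} − 1 for 2 ≤ i ≤ k. Then the partitions P with Des(P) = Q are exactly those whose Burge code equals a^{δ₁−i₁} b^{i₁} a^{δ₂−i₂+1} b^{i₂} ⋯ a^{δ_k−i_k+1} b^{i_k} a for some (i₁,...,i_k) ∈ [1,δ₁] × ⋯ × [1,δ_k]; moreover the partition with code indexed by (i₁,...,i_k) has exactly i₁ + ⋯ + i_k parts. In particular |Des⁻¹(Q)| = δ₁δ₂⋯δ_k. -/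

import Mathlib

open scoped Classical

noncomputable section

/-- `f` is a frequency sequence: `f 0 = 0` and finite support. -/
def IsFreq (f : ℕ → ℕ) : Prop := f 0 = 0 ∧ (Function.support f).Finite

/-- size `|f| = ∑ i·f i`. -/
def fsize (f : ℕ → ℕ) : ℕ := ∑ᶠ n, n * f n

/-- length `ℓ(f) = ∑ f i`. -/
def flen (f : ℕ → ℕ) : ℕ := ∑ᶠ n, f n

/-- the support `S(f)`. -/
def suppF (f : ℕ → ℕ) : Set ℕ := {i | 1 ≤ i ∧ f i ≠ 0}

/-- `[i,j]` is a spread of `f`: a maximal interval contained in the support. -/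
def IsSpread (f : ℕ → ℕ) (i j : ℕ) : Prop :=
  1 ≤ i ∧ i ≤ j ∧ (∀ k, i ≤ k → k ≤ j → f k ≠ 0) ∧ (i = 1 ∨ f (i - 1) = 0) ∧ f (j + 1) = 0

/-- `L(f)`: every other element of each spread, starting from the left end. -/
def Lset (f : ℕ → ℕ) : Set ℕ :=
  {q | ∃ i j, IsSpread f i j ∧ i ≤ q ∧ q ≤ j ∧ (q - i) % 2 = 0}

/-- `R(f)`: every other element of each spread, starting from the right end. -/
def Rset (f : ℕ → ℕ) : Set ℕ :=
  {q | ∃ i j, IsSpread f i j ∧ i ≤ q ∧ q ≤ j ∧ (j - q) % 2 = 0}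

/-- the 2-measure, as the cardinality of `R(f)`. -/
def mu2 (f : ℕ → ℕ) : ℕ := (Rset f).ncard

/-- The Burge demotion operator `∂`. -/
def dB (f : ℕ → ℕ) : ℕ → ℕ := fun n =>
  if n = 0 then 0
  else f n - (if n ∈ Rset f then 1 else 0) + (if n + 1 ∈ Rset f then 1 else 0)

/-- The promotion operator `α`. -/
def aB (f : ℕ → ℕ) : ℕ → ℕ := fun n =>
  if n = 0 then 0
  else f n - (if n ∈ Lset f then 1 else 0) + (if n - 1 ∈ Lset f then 1 else 0)

/-- the shift `(f₂, f₃, …)`; on partitions this is `P ↦ P - 1`. -/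
def tailF (f : ℕ → ℕ) : ℕ → ℕ := fun n => if n = 0 then 0 else f (n + 1)

/-- The operator `β`: `β(f) = (f₁ + 1, α(f₂, f₃, …))`. -/
def bB (f : ℕ → ℕ) : ℕ → ℕ := fun n =>
  if n = 0 then 0 else if n = 1 then f 1 + 1 else aB (tailF f) (n - 1)

/-- the zero sequence (empty partition). -/
def zeroF : ℕ → ℕ := fun _ => 0

/-- `k` minimal with `∂^[k] f = 0`. -/
def chainK (f : ℕ → ℕ) : ℕ :=
  if h : ∃ m, dB^[m] f = zeroF then Nat.find h else 0

/-- The Burge code of `f`, as a list of letters; `false` = `a`, `true` = `b`.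
The `i`-th letter (0-indexed `i`) records whether `∂^[i] f ∈ B`, i.e. `1 ∈ R(∂^[i] f)`. -/
def burgeCode (f : ℕ → ℕ) : List Bool :=
  (List.range (chainK f + 1)).map fun i => if 1 ∈ Rset (dB^[i] f) then true else false

/-- descent set of a word: 1-indexed positions `i` with `ωᵢ = b`, `ω_{i+1} = a`. -/
def descSet (w : List Bool) : Set ℕ :=
  {i | 1 ≤ i ∧ w[i - 1]? = some true ∧ w[i]? = some false}

/-- the descent set of (the Burge code of) a partition. -/
def DesSet (f : ℕ → ℕ) : Set ℕ := descSet (burgeCode f)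

/-- `Des(P)` regarded as a partition, via its frequency sequence. -/
def desFreq (f : ℕ → ℕ) : ℕ → ℕ := fun i => if i ∈ DesSet f then 1 else 0

/-- the 2-measure as the maximal size of a subset of the support without
consecutive pairs. -/
def twoMeasure (f : ℕ → ℕ) : ℕ :=
  sSup {n | ∃ T : Finset ℕ, (↑T : Set ℕ) ⊆ suppF f ∧ (∀ x ∈ T, x + 1 ∉ T) ∧ T.card = n}

/-- evaluation at `i`: `ν_i(f) = i f_i + (i+1) f_{i+1} + 2 ∑_{j>i+1} f_j`, with `ν₀ = ν₁`. -/
def nuI (f : ℕ → ℕ) (i : ℕ) : ℕ :=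
  (max i 1) * f (max i 1) + (max i 1 + 1) * f (max i 1 + 1)
    + 2 * ∑ᶠ j ∈ {j : ℕ | max i 1 + 1 < j}, f j

/-- annihilation at `i`: `ρ_i(f) = (f₁, …, f_{i-1}, f_{i+2}, f_{i+3}, …)`, with `ρ₀ = ρ₁`. -/
def rhoI (f : ℕ → ℕ) (i : ℕ) : ℕ → ℕ := fun n =>
  if n = 0 then 0 else if n < max i 1 then f n else f (n + 2)

/-- `i ≥ 1` is right admissible in `f`. -/
def RightAdm (f : ℕ → ℕ) (i : ℕ) : Prop :=
  1 ≤ i ∧ 0 < f i ∧ (0 < f (i + 1) ∨ (f (i - 1) = 0 ∧ f (i + 1) = 0))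

/-- `i ≥ 0` is left admissible in `f`. -/
def LeftAdm (f : ℕ → ℕ) (i : ℕ) : Prop :=
  0 < f (i + 1) ∧ (0 < f i ∨ (f i = 0 ∧ f (i + 2) = 0))

/-- `i` is a maximal index for `f`: `ν_i(f)` is nonzero and maximal. -/
def MaxIdx (f : ℕ → ℕ) (i : ℕ) : Prop :=
  nuI f i ≠ 0 ∧ ∀ j, nuI f j ≤ nuI f i

end

/-- the word `a^{δ₁-i₁} b^{i₁} a^{δ₂-i₂+1} b^{i₂} ⋯ a^{δ_k-i_k+1} b^{i_k} a`. -/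
def boxWord (k : ℕ) (δ : ℕ → ℕ) (i : ℕ → ℕ) : List Bool :=
  List.replicate (δ 1 - i 1) false ++ List.replicate (i 1) true ++
    ((List.range (k - 1)).map (fun t =>
      List.replicate (δ (t + 2) - i (t + 2) + 1) false ++
        List.replicate (i (t + 2)) true)).flatten ++ [false]

/-!
The Burge code is a bijection onto `(a*b)*a`: `∂` removes the first letter of the code, and
`α`, `β` put back an `a`, a `b`. The sets `R(f)` and `L(f)` are the unique solutions of one-step
recursions along the support (`q ∈ R ↔ f q ≠ 0 ∧ q + 1 ∉ R`, and the mirror image for `L`),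
which computes `R(α g)`, `L(∂ f)` and `R` of a shifted sequence; this gives `∂ ∘ α = id`,
`∂ ∘ β = id` and the converses. Every `b` of the code accounts for one part, and `∂` lowers the
size by `|R(f)|`, so the code is finite.

A word of `(a*b)*a` is uniquely a product of blocks `a^c b^d` (`d ≥ 1`, and `c ≥ 1` after the
first block) followed by `a`, and its descents are the partial sums of the block lengths. So
`Des = Q` prescribes the block lengths `q_k, q_{k-1} - q_k, …, q_1 - q_2`, that is
`δ₁, δ₂ + 1, …, δ_k + 1`, and leaves the numbers `i_j ∈ [1, δ_j]` of `b`'s free.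
-/

open Filter

section Spreads

variable {f : ℕ → ℕ} {q : ℕ}

theorem Rset_subset_suppF : Rset f ⊆ suppF f := by
  rintro q ⟨i, j, hs, hiq, hqj, -⟩
  exact ⟨hs.1.trans hiq, hs.2.2.1 q hiq hqj⟩

theorem Lset_subset_suppF : Lset f ⊆ suppF f := by
  rintro q ⟨i, j, hs, hiq, hqj, -⟩
  exact ⟨hs.1.trans hiq, hs.2.2.1 q hiq hqj⟩

theorem zero_notMem_Rset : 0 ∉ Rset f := fun h => by
  have := (Rset_subset_suppF h).1
  omega

theorem zero_notMem_Lset : 0 ∉ Lset f := fun h => by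
  have := (Lset_subset_suppF h).1
  omega

theorem IsSpread.eq_of_le_of_le {i j i' j' : ℕ} (h : IsSpread f i j) (h' : IsSpread f i' j')
    (hiq : i ≤ q) (hqj : q ≤ j) (hiq' : i' ≤ q) (hqj' : q ≤ j') : i = i' ∧ j = j' := by
  obtain ⟨hi1, -, hnz, hl, hr⟩ := h
  obtain ⟨hi1', -, hnz', hl', hr'⟩ := h'
  refine ⟨?_, ?_⟩
  · rcases lt_trichotomy i i' with hlt | heq | hgt
    · exact absurd (hl'.resolve_left (by omega)) (hnz _ (by omega) (by omega))
    · exact heq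
    · exact absurd (hl.resolve_left (by omega)) (hnz' _ (by omega) (by omega))
  · rcases lt_trichotomy j j' with hlt | heq | hgt
    · exact absurd hr (hnz' _ (by omega) (by omega))
    · exact heq
    · exact absurd hr' (hnz _ (by omega) (by omega))

theorem exists_isSpread (hf : ∀ᶠ n in atTop, f n = 0) (hq : q ∈ suppF f) :
    ∃ i j, IsSpread f i j ∧ i ≤ q ∧ q ≤ j := by
  obtain ⟨hq1, hfq⟩ := hq
  obtain ⟨N, hN⟩ := eventually_atTop.1 hf
  have hj : ∃ j, q ≤ j ∧ f (j + 1) = 0 := ⟨q + N, by omega, hN _ (by omega)⟩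
  have hi : ∃ i, 1 ≤ i ∧ ∀ t, i ≤ t → t ≤ q → f t ≠ 0 :=
    ⟨q, hq1, fun t h1 h2 => by rwa [show t = q by omega]⟩
  obtain ⟨hqj, hj0⟩ := Nat.find_spec hj
  obtain ⟨hi1, hileft⟩ := Nat.find_spec hi
  have hiq : Nat.find hi ≤ q := Nat.find_min' hi ⟨hq1, fun t h1 h2 => by rwa [show t = q by omega]⟩
  have hright : ∀ t, q ≤ t → t ≤ Nat.find hj → f t ≠ 0 := by
    intro t hqt htj ht
    rcases hqt.eq_or_lt with rfl | hlt
    · exact hfq ht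
    · exact Nat.find_min hj (m := t - 1) (by omega)
        ⟨by omega, by rwa [Nat.sub_add_cancel (by omega)]⟩
  refine ⟨Nat.find hi, Nat.find hj, ⟨hi1, by omega, fun t hit htj => ?_, ?_, hj0⟩, hiq, hqj⟩
  · rcases le_or_gt t q with h | h
    · exact hileft t hit h
    · exact hright t h.le htj
  · by_contra hc
    rw [not_or] at hc
    refine Nat.find_min hi (m := Nat.find hi - 1) (by omega) ⟨by omega, fun t h1 h2 => ?_⟩
    rcases h1.eq_or_lt with rfl | hlt
    · exact hc.2
    · exact hileft t (by omega) h2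

theorem IsSpread.eq_of_le_of_succ_le {i j i' j' : ℕ} (h : IsSpread f i j)
    (h' : IsSpread f i' j') (hiq : i ≤ q) (hqj : q ≤ j) (hiq' : i' ≤ q + 1) (hqj' : q + 1 ≤ j') :
    i = i' ∧ j = j' := by
  have hqj1 : q + 1 ≤ j := by
    by_contra hlt
    exact h'.2.2.1 (q + 1) hiq' hqj' (by rw [show q + 1 = j + 1 by omega]; exact h.2.2.2.2)
  exact h.eq_of_le_of_le h' (by omega) hqj1 hiq' hqj'

theorem succ_notMem_Rset (h : q ∈ Rset f) : q + 1 ∉ Rset f := by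
  obtain ⟨i, j, hs, hiq, hqj, hpar⟩ := h
  rintro ⟨i', j', hs', hiq', hqj', hpar'⟩
  obtain ⟨-, rfl⟩ := hs.eq_of_le_of_succ_le hs' hiq hqj hiq' hqj'
  omega

theorem succ_notMem_Lset (h : q ∈ Lset f) : q + 1 ∉ Lset f := by
  obtain ⟨i, j, hs, hiq, hqj, hpar⟩ := h
  rintro ⟨i', j', hs', hiq', hqj', hpar'⟩
  obtain ⟨rfl, -⟩ := hs.eq_of_le_of_succ_le hs' hiq hqj hiq' hqj'
  omega

theorem pred_notMem_Lset (h : q ∈ Lset f) : q - 1 ∉ Lset f := fun h' => by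
  have := (Lset_subset_suppF h).1
  exact succ_notMem_Lset h' (by rwa [Nat.sub_add_cancel this])

theorem mem_Rset_iff (hf : ∀ᶠ n in atTop, f n = 0) (hq : 1 ≤ q) :
    q ∈ Rset f ↔ f q ≠ 0 ∧ q + 1 ∉ Rset f := by
  refine ⟨fun h => ⟨(Rset_subset_suppF h).2, succ_notMem_Rset h⟩, fun ⟨hfq, hq1⟩ => ?_⟩
  obtain ⟨i, j, hs, hiq, hqj⟩ := exists_isSpread hf ⟨hq, hfq⟩
  rcases Nat.mod_two_eq_zero_or_one (j - q) with h | h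
  · exact ⟨i, j, hs, hiq, hqj, h⟩
  · exact absurd ⟨i, j, hs, by omega, by omega, by omega⟩ hq1

theorem mem_Lset_iff (hf : ∀ᶠ n in atTop, f n = 0) (hq : 1 ≤ q) :
    q ∈ Lset f ↔ f q ≠ 0 ∧ q - 1 ∉ Lset f := by
  refine ⟨fun h => ⟨(Lset_subset_suppF h).2, pred_notMem_Lset h⟩, fun ⟨hfq, hq1⟩ => ?_⟩
  obtain ⟨i, j, hs, hiq, hqj⟩ := exists_isSpread hf ⟨hq, hfq⟩
  have := hs.1
  rcases Nat.mod_two_eq_zero_or_one (q - i) with h | h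
  · exact ⟨i, j, hs, hiq, hqj, h⟩
  · exact absurd ⟨i, j, hs, by omega, by omega, by omega⟩ hq1

theorem mem_Rset_or_succ_mem_Rset (hf : ∀ᶠ n in atTop, f n = 0) (hq : q ∈ suppF f) :
    q ∈ Rset f ∨ q + 1 ∈ Rset f := by
  rw [or_iff_not_imp_left, mem_Rset_iff hf hq.1, not_and_not_right]
  exact fun h => h hq.2

theorem mem_Lset_or_pred_mem_Lset (hf : ∀ᶠ n in atTop, f n = 0) (hq : q ∈ suppF f) :
    q ∈ Lset f ∨ q - 1 ∈ Lset f := by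
  rw [or_iff_not_imp_left, mem_Lset_iff hf hq.1, not_and_not_right]
  exact fun h => h hq.2

theorem Rset_eq_of_forall (hf : ∀ᶠ n in atTop, f n = 0) {S : Set ℕ} (h0 : 0 ∉ S)
    (hS : ∀ q, 1 ≤ q → (q ∈ S ↔ f q ≠ 0 ∧ q + 1 ∉ S)) : Rset f = S := by
  obtain ⟨N, hN⟩ := eventually_atTop.1 hf
  ext q
  induction hd : N - q generalizing q with
  | zero =>
    have hfq : f q = 0 := hN q (by omega)
    refine iff_of_false (fun h => (Rset_subset_suppF h).2 hfq) fun h => ?_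
    rcases Nat.eq_zero_or_pos q with rfl | hq
    · exact h0 h
    · exact ((hS q hq).1 h).1 hfq
  | succ d ih =>
    rcases Nat.eq_zero_or_pos q with rfl | hq
    · exact iff_of_false zero_notMem_Rset h0
    · rw [mem_Rset_iff hf hq, hS q hq, ih (q + 1) (by omega)]

theorem Lset_eq_of_forall (hf : ∀ᶠ n in atTop, f n = 0) {S : Set ℕ} (h0 : 0 ∉ S)
    (hS : ∀ q, 1 ≤ q → (q ∈ S ↔ f q ≠ 0 ∧ q - 1 ∉ S)) : Lset f = S := by
  ext q
  induction q using Nat.strong_induction_on with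
  | _ q ih =>
    rcases Nat.eq_zero_or_pos q with rfl | hq
    · exact iff_of_false zero_notMem_Lset h0
    · rw [mem_Lset_iff hf hq, hS q hq, ih (q - 1) (by omega)]

end Spreads

section Operators

variable {f g : ℕ → ℕ}

theorem eventually_dB_eq_zero (hf : ∀ᶠ n in atTop, f n = 0) : ∀ᶠ n in atTop, dB f n = 0 := by
  filter_upwards [hf, (tendsto_add_atTop_nat 1).eventually hf, eventually_ne_atTop 0]
    with n h h1 hn
  have hR : n ∉ Rset f := fun h' => (Rset_subset_suppF h').2 h
  have hR1 : n + 1 ∉ Rset f := fun h' => (Rset_subset_suppF h').2 h1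
  simp [dB, hn, hR, hR1, h]

theorem eventually_aB_eq_zero (hg : ∀ᶠ n in atTop, g n = 0) : ∀ᶠ n in atTop, aB g n = 0 := by
  filter_upwards [hg, (tendsto_sub_atTop_nat 1).eventually hg, eventually_ne_atTop 0]
    with n h h1 hn
  have hL : n ∉ Lset g := fun h' => (Lset_subset_suppF h').2 h
  have hL1 : n - 1 ∉ Lset g := fun h' => (Lset_subset_suppF h').2 h1
  simp [aB, hn, hL, hL1, h]

theorem eventually_tailF_eq_zero (hg : ∀ᶠ n in atTop, g n = 0) :
    ∀ᶠ n in atTop, tailF g n = 0 := by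
  filter_upwards [(tendsto_add_atTop_nat 1).eventually hg] with n h
  simp [tailF, h]

theorem tailF_bB : tailF (bB g) = aB (tailF g) := by
  funext n
  rcases Nat.eq_zero_or_pos n with rfl | hn
  · simp [tailF, aB]
  · simp [tailF, bB, show n ≠ 0 by omega]

theorem eventually_bB_eq_zero (hg : ∀ᶠ n in atTop, g n = 0) : ∀ᶠ n in atTop, bB g n = 0 := by
  filter_upwards [(tendsto_sub_atTop_nat 1).eventually
    (eventually_aB_eq_zero (eventually_tailF_eq_zero hg)), eventually_ge_atTop 2] with n h hn
  simpa [bB, show n ≠ 0 by omega, show n ≠ 1 by omega] using h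

theorem Rset_aB (hg : ∀ᶠ n in atTop, g n = 0) :
    Rset (aB g) = {q | 1 ≤ q ∧ q - 1 ∈ Lset g} := by
  refine Rset_eq_of_forall (eventually_aB_eq_zero hg) (by simp) fun q hq => ?_
  simp only [Set.mem_ofPred_eq, Nat.add_sub_cancel, hq, true_and, le_add_iff_nonneg_left,
    zero_le]
  by_cases hA : q - 1 ∈ Lset g <;> by_cases hB : q ∈ Lset g
  · exact absurd hA (pred_notMem_Lset hB)
  · simp [aB, hA, hB, show q ≠ 0 by omega]
  · simp [hA, hB]
  · have hgq : g q = 0 := by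
      by_contra hgq
      exact (mem_Lset_or_pred_mem_Lset hg ⟨hq, hgq⟩).elim hB hA
    simp [aB, hA, hB, hgq]

theorem Lset_dB (hf : ∀ᶠ n in atTop, f n = 0) (h1 : 1 ∉ Rset f) :
    Lset (dB f) = {q | q + 1 ∈ Rset f} := by
  refine Lset_eq_of_forall (eventually_dB_eq_zero hf) h1 fun q hq => ?_
  simp only [Set.mem_ofPred_eq, Nat.sub_add_cancel hq]
  by_cases hA : q ∈ Rset f <;> by_cases hB : q + 1 ∈ Rset f
  · exact absurd hB (succ_notMem_Rset hA)
  · simp [hA, hB]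
  · simp [dB, hA, hB, show q ≠ 0 by omega]
  · have hfq : f q = 0 := by
      by_contra hfq
      exact (mem_Rset_or_succ_mem_Rset hf ⟨hq, hfq⟩).elim hA hB
    simp [dB, hA, hB, hfq]

theorem Rset_tailF (hf : ∀ᶠ n in atTop, f n = 0) :
    Rset (tailF f) = {q | 1 ≤ q ∧ q + 1 ∈ Rset f} := by
  refine Rset_eq_of_forall (eventually_tailF_eq_zero hf) (by simp) fun q hq => ?_
  simp only [Set.mem_ofPred_eq, hq, true_and, le_add_iff_nonneg_left, zero_le]
  rw [mem_Rset_iff hf (by omega)]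
  simp [tailF, show q ≠ 0 by omega]

theorem tailF_dB (hf : ∀ᶠ n in atTop, f n = 0) : tailF (dB f) = dB (tailF f) := by
  funext n
  rcases Nat.eq_zero_or_pos n with rfl | hn
  · simp [tailF, dB]
  · simp [tailF, dB, Rset_tailF hf, show 1 ≤ n by omega, show n ≠ 0 by omega]

end Operators

section Inversion

variable {f g : ℕ → ℕ}

theorem one_notMem_Rset_aB (hg : ∀ᶠ n in atTop, g n = 0) : 1 ∉ Rset (aB g) := by
  simp [Rset_aB hg, zero_notMem_Lset]

theorem dB_aB (h0 : g 0 = 0) (hg : ∀ᶠ n in atTop, g n = 0) : dB (aB g) = g := by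
  funext n
  rcases Nat.eq_zero_or_pos n with rfl | hn
  · simp [dB, h0]
  have hn0 : n ≠ 0 := by omega
  by_cases hA : n - 1 ∈ Lset g <;> by_cases hB : n ∈ Lset g
  · exact absurd hA (pred_notMem_Lset hB)
  · simp [dB, aB, Rset_aB hg, hn0, hA, hB, show 1 ≤ n by omega]
  · have := (Lset_subset_suppF hB).2
    simp [dB, aB, Rset_aB hg, hn0, hA, hB]
    omega
  · simp [dB, aB, Rset_aB hg, hn0, hA, hB]

theorem aB_dB (h0 : f 0 = 0) (hf : ∀ᶠ n in atTop, f n = 0) (h1 : 1 ∉ Rset f) :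
    aB (dB f) = f := by
  funext n
  rcases Nat.eq_zero_or_pos n with rfl | hn
  · simp [aB, h0]
  have hn0 : n ≠ 0 := by omega
  by_cases hA : n ∈ Rset f <;> by_cases hB : n + 1 ∈ Rset f
  · exact absurd hB (succ_notMem_Rset hA)
  · have := (Rset_subset_suppF hA).2
    simp [aB, dB, Lset_dB hf h1, hn0, hA, hB, Nat.sub_add_cancel hn]
    omega
  · simp [aB, dB, Lset_dB hf h1, hn0, hA, hB, Nat.sub_add_cancel hn]
  · simp [aB, dB, Lset_dB hf h1, hn0, hA, hB, Nat.sub_add_cancel hn]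

theorem eq_of_tailF_eq {F G : ℕ → ℕ} (h0 : F 0 = G 0) (h1 : F 1 = G 1)
    (h : tailF F = tailF G) : F = G := by
  funext n
  match n with
  | 0 => exact h0
  | 1 => exact h1
  | n + 2 => simpa [tailF] using congrFun h (n + 1)

theorem one_mem_Rset_bB (hg : ∀ᶠ n in atTop, g n = 0) : 1 ∈ Rset (bB g) := by
  rw [mem_Rset_iff (eventually_bB_eq_zero hg) le_rfl]
  have h : 1 ∉ Rset (tailF (bB g)) := by
    rw [tailF_bB]
    exact one_notMem_Rset_aB (eventually_tailF_eq_zero hg)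
  simp_all [bB, Rset_tailF (eventually_bB_eq_zero hg)]

theorem dB_bB (h0 : g 0 = 0) (hg : ∀ᶠ n in atTop, g n = 0) : dB (bB g) = g := by
  have hbg := eventually_bB_eq_zero hg
  refine eq_of_tailF_eq (by simp [dB, h0]) ?_ ?_
  · have h2 : 2 ∉ Rset (bB g) := succ_notMem_Rset (one_mem_Rset_bB hg)
    simp [dB, bB, one_mem_Rset_bB hg, h2]
  · rw [tailF_dB hbg, tailF_bB, dB_aB (by simp [tailF]) (eventually_tailF_eq_zero hg)]

theorem bB_dB (h0 : f 0 = 0) (hf : ∀ᶠ n in atTop, f n = 0) (h1 : 1 ∈ Rset f) :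
    bB (dB f) = f := by
  refine eq_of_tailF_eq (by simp [bB, h0]) ?_ ?_
  · have h2 : 2 ∉ Rset f := succ_notMem_Rset h1
    have := (Rset_subset_suppF h1).2
    simp [bB, dB, h1, h2]
    omega
  · have h1' : 1 ∉ Rset (tailF f) := by simpa [Rset_tailF hf] using succ_notMem_Rset h1
    rw [tailF_bB, tailF_dB hf, aB_dB (by simp [tailF]) (eventually_tailF_eq_zero hf) h1']

end Inversion

section Sizes

variable {f g : ℕ → ℕ}

theorem IsFreq.eventually_eq_zero (hf : IsFreq f) : ∀ᶠ n in atTop, f n = 0 := by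
  rw [← Nat.cofinite_eq_atTop, eventually_cofinite]
  exact hf.2

theorem isFreq_of_eventually (h0 : f 0 = 0) (hf : ∀ᶠ n in atTop, f n = 0) : IsFreq f := by
  rw [← Nat.cofinite_eq_atTop, eventually_cofinite] at hf
  exact ⟨h0, hf⟩

theorem isFreq_dB (hf : IsFreq f) : IsFreq (dB f) :=
  isFreq_of_eventually (by simp [dB]) (eventually_dB_eq_zero hf.eventually_eq_zero)

theorem isFreq_aB (hf : IsFreq f) : IsFreq (aB f) :=
  isFreq_of_eventually (by simp [aB]) (eventually_aB_eq_zero hf.eventually_eq_zero)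

theorem isFreq_bB (hf : IsFreq f) : IsFreq (bB f) :=
  isFreq_of_eventually (by simp [bB]) (eventually_bB_eq_zero hf.eventually_eq_zero)

theorem finsum_eq_sum_range {N : ℕ} (h : ∀ n, N ≤ n → g n = 0) :
    ∑ᶠ n, g n = ∑ n ∈ Finset.range N, g n :=
  finsum_eq_sum_of_support_subset g fun n hn => by
    by_contra hN
    exact hn (h n (by simpa using hN))

theorem dB_add_indicator_Rset {n : ℕ} (hn : n ≠ 0) :
    dB f n + (Rset f).indicator 1 n = f n + (Rset f).indicator 1 (n + 1) := by
  by_cases hA : n ∈ Rset f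
  · have := (Rset_subset_suppF hA).2
    simp [dB, hn, hA, succ_notMem_Rset hA]
    omega
  · simp [dB, hn, hA, Set.indicator_apply]

theorem flen_dB_add (hf : IsFreq f) :
    flen (dB f) + (if 1 ∈ Rset f then 1 else 0) = flen f := by
  obtain ⟨N, hN⟩ := eventually_atTop.1
    (hf.eventually_eq_zero.and (eventually_dB_eq_zero hf.eventually_eq_zero))
  -- summing `dB_add_indicator_Rset` over `n ≥ 1` telescopes the indicator of `R(f)`
  have hsum := Finset.sum_congr rfl fun n (_ : n ∈ Finset.range N) =>
    dB_add_indicator_Rset (f := f) (n := n + 1) (by omega)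
  rw [Finset.sum_add_distrib, Finset.sum_add_distrib] at hsum
  have hshift := Finset.sum_range_succ' (fun n => (Rset f).indicator (1 : ℕ → ℕ) (n + 1)) N
  rw [Finset.sum_range_succ, Set.indicator_of_notMem
    fun h => (Rset_subset_suppF h).2 (hN (N + 1) (by omega)).1] at hshift
  rw [flen, flen, finsum_eq_sum_range (N := N + 1) fun n hn => (hN n (by omega)).2,
    finsum_eq_sum_range (N := N + 1) fun n hn => (hN n (by omega)).1,
    Finset.sum_range_succ', Finset.sum_range_succ']
  have h0 : dB f 0 = 0 := by simp [dB]
  have h1 : (Rset f).indicator (1 : ℕ → ℕ) 1 = if 1 ∈ Rset f then 1 else 0 := rfl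
  rw [h0, hf.1]
  simp only [zero_add] at hshift
  omega

theorem Rset_nonempty (hf : IsFreq f) (hne : f ≠ zeroF) : (Rset f).Nonempty := by
  obtain ⟨q, hq⟩ : ∃ q, f q ≠ 0 := by
    by_contra h
    exact hne (funext (not_exists_not.1 h))
  have hq1 : 1 ≤ q := Nat.pos_of_ne_zero fun h => hq (h ▸ hf.1)
  exact (mem_Rset_or_succ_mem_Rset hf.eventually_eq_zero ⟨hq1, hq⟩).elim (⟨_, ·⟩) (⟨_, ·⟩)

theorem fsize_dB_lt (hf : IsFreq f) (hne : f ≠ zeroF) : fsize (dB f) < fsize f := by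
  obtain ⟨N, hN⟩ := eventually_atTop.1
    (hf.eventually_eq_zero.and (eventually_dB_eq_zero hf.eventually_eq_zero))
  have hsum := Finset.sum_congr rfl fun n (_ : n ∈ Finset.range (N + 1)) =>
    show n * dB f n + n * (Rset f).indicator 1 n = n * f n + n * (Rset f).indicator 1 (n + 1) by
      rcases Nat.eq_zero_or_pos n with rfl | hn
      · simp
      · rw [← mul_add, ← mul_add, dB_add_indicator_Rset (by omega)]
  rw [Finset.sum_add_distrib, Finset.sum_add_distrib,
    Finset.sum_range_succ' (fun n => n * (Rset f).indicator 1 n),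
    Finset.sum_range_succ (fun n => n * (Rset f).indicator 1 (n + 1)),
    Set.indicator_of_notMem fun h => (Rset_subset_suppF h).2 (hN (N + 1) (by omega)).1] at hsum
  simp only [add_mul, one_mul, Finset.sum_add_distrib, zero_mul, mul_zero, add_zero] at hsum
  have hpos : 0 < ∑ n ∈ Finset.range N, (Rset f).indicator 1 (n + 1) := by
    obtain ⟨p, hp⟩ := Rset_nonempty hf hne
    obtain ⟨hp1, hfp⟩ := Rset_subset_suppF hp
    have hpN : p ≤ N := by
      by_contra hlt
      exact hfp (hN p (by omega)).1
    refine Finset.sum_pos' (fun _ _ => Nat.zero_le _) ⟨p - 1, Finset.mem_range.2 (by omega), ?_⟩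
    simp [Nat.sub_add_cancel hp1, hp]
  rw [fsize, fsize, finsum_eq_sum_range (N := N + 1) fun n hn => by simp [(hN n (by omega)).2],
    finsum_eq_sum_range (N := N + 1) fun n hn => by simp [(hN n (by omega)).1]]
  omega

@[elab_as_elim]
theorem IsFreq.induction_dB {P : (ℕ → ℕ) → Prop} (zero : P zeroF)
    (step : ∀ f, IsFreq f → f ≠ zeroF → P (dB f) → P f) (hf : IsFreq f) : P f := by
  induction hs : fsize f using Nat.strong_induction_on generalizing f with
  | _ s ih =>
    by_cases hz : f = zeroF
    · exact hz ▸ zero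
    · exact step f hf hz (ih _ (hs ▸ fsize_dB_lt hf hz) (isFreq_dB hf) rfl)

end Sizes

section Code

variable {f : ℕ → ℕ} {w : List Bool}

theorem Rset_zeroF : Rset zeroF = ∅ :=
  Set.eq_empty_of_forall_notMem fun _ h => (Rset_subset_suppF h).2 rfl

theorem Lset_zeroF : Lset zeroF = ∅ :=
  Set.eq_empty_of_forall_notMem fun _ h => (Lset_subset_suppF h).2 rfl

theorem dB_zeroF : dB zeroF = zeroF :=
  funext fun n => by simp [dB, zeroF, Rset_zeroF]

theorem aB_zeroF : aB zeroF = zeroF :=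
  funext fun n => by simp [aB, zeroF, Lset_zeroF]

theorem exists_iterate_dB_eq_zeroF (hf : IsFreq f) : ∃ m, dB^[m] f = zeroF :=
  IsFreq.induction_dB ⟨0, rfl⟩ (fun _ _ _ ⟨m, hm⟩ => ⟨m + 1, hm⟩) hf

theorem chainK_zeroF : chainK zeroF = 0 := by
  rw [chainK, dif_pos ⟨0, rfl⟩, Nat.find_eq_zero]
  rfl

theorem chainK_eq_succ (hf : IsFreq f) (hne : f ≠ zeroF) : chainK f = chainK (dB f) + 1 := by
  have h := exists_iterate_dB_eq_zeroF hf
  have h' := exists_iterate_dB_eq_zeroF (isFreq_dB hf)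
  rw [chainK, chainK, dif_pos h, dif_pos h', Nat.find_eq_iff]
  refine ⟨Nat.find_spec h', fun m hm hc => ?_⟩
  cases m with
  | zero => exact hne hc
  | succ m => exact Nat.find_min h' (by omega) hc

theorem burgeCode_zeroF : burgeCode zeroF = [false] := by
  simp [burgeCode, chainK_zeroF, Rset_zeroF]

theorem burgeCode_eq_cons (hf : IsFreq f) (hne : f ≠ zeroF) :
    burgeCode f = (if 1 ∈ Rset f then true else false) :: burgeCode (dB f) := by
  rw [burgeCode, burgeCode, chainK_eq_succ hf hne, List.range_succ_eq_map, List.map_cons,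
    List.map_map]
  rfl

theorem length_burgeCode : (burgeCode f).length = chainK f + 1 := by
  simp [burgeCode]

theorem flen_eq_count_burgeCode (hf : IsFreq f) : flen f = (burgeCode f).count true := by
  refine IsFreq.induction_dB ?_ (fun f hf hne ih => ?_) hf
  · simp [flen, zeroF, burgeCode_zeroF]
  · rw [burgeCode_eq_cons hf hne, ← flen_dB_add hf, ih]
    by_cases h1 : 1 ∈ Rset f <;> simp [h1]

/-- The language `(a*b)*a`, with `false = a` and `true = b`. -/
inductive IsCodeWord : List Bool → Prop
  | a : IsCodeWord [false]
  | b {w : List Bool} : IsCodeWord w → IsCodeWord (true :: w)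
  | a_cons {w : List Bool} : IsCodeWord w → 2 ≤ w.length → IsCodeWord (false :: w)

theorem isCodeWord_burgeCode (hf : IsFreq f) : IsCodeWord (burgeCode f) := by
  refine IsFreq.induction_dB ?_ (fun f hf hne ih => ?_) hf
  · exact burgeCode_zeroF ▸ .a
  · rw [burgeCode_eq_cons hf hne]
    by_cases h1 : 1 ∈ Rset f
    · simpa [h1] using ih.b
    · have hdne : dB f ≠ zeroF := fun h => hne <| by
        rw [← aB_dB hf.1 hf.eventually_eq_zero h1, h, aB_zeroF]
      have := chainK_eq_succ (isFreq_dB hf) hdne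
      simpa [h1] using ih.a_cons (by rw [length_burgeCode]; omega)

noncomputable def burgeDecode : List Bool → ℕ → ℕ
  | [] => zeroF
  | x :: w => if x then bB (burgeDecode w) else aB (burgeDecode w)

theorem isFreq_burgeDecode (w : List Bool) : IsFreq (burgeDecode w) := by
  induction w with
  | nil => exact isFreq_of_eventually rfl (Eventually.of_forall fun _ => rfl)
  | cons x w ih => cases x <;> simp [burgeDecode, isFreq_aB ih, isFreq_bB ih]

theorem burgeDecode_burgeCode (hf : IsFreq f) : burgeDecode (burgeCode f) = f := by
  refine IsFreq.induction_dB ?_ (fun f hf hne ih => ?_) hf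
  · simp [burgeCode_zeroF, burgeDecode, aB_zeroF]
  · rw [burgeCode_eq_cons hf hne]
    by_cases h1 : 1 ∈ Rset f
    · simp [burgeDecode, h1, ih, bB_dB hf.1 hf.eventually_eq_zero h1]
    · simp [burgeDecode, h1, ih, aB_dB hf.1 hf.eventually_eq_zero h1]

theorem burgeCode_burgeDecode (hw : IsCodeWord w) : burgeCode (burgeDecode w) = w := by
  induction hw with
  | a => simp [burgeDecode, aB_zeroF, burgeCode_zeroF]
  | @b w _ ih =>
    have hg := isFreq_burgeDecode w
    have hne : bB (burgeDecode w) ≠ zeroF := fun h => by simpa [bB, zeroF] using congrFun h 1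
    simp only [burgeDecode, if_true]
    rw [burgeCode_eq_cons (isFreq_bB hg) hne, dB_bB hg.1 hg.eventually_eq_zero,
      if_pos (one_mem_Rset_bB hg.eventually_eq_zero), ih]
  | @a_cons w _ hl ih =>
    have hg := isFreq_burgeDecode w
    have hne : burgeDecode w ≠ zeroF := fun h => by
      rw [h, burgeCode_zeroF] at ih
      simp [← ih] at hl
    have hane : aB (burgeDecode w) ≠ zeroF := fun h => hne <| by
      rw [← dB_aB hg.1 hg.eventually_eq_zero, h, dB_zeroF]
    simp only [burgeDecode, Bool.false_eq_true, if_false]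
    rw [burgeCode_eq_cons (isFreq_aB hg) hane, dB_aB hg.1 hg.eventually_eq_zero,
      if_neg (one_notMem_Rset_aB hg.eventually_eq_zero), ih]

end Code

section Words

def blockWord : List (ℕ × ℕ) → List Bool
  | [] => [false]
  | p :: L => List.replicate p.1 false ++ List.replicate p.2 true ++ blockWord L

/-- The normalisation that makes the block decomposition of a word unique. -/
def IsBlockList (L : List (ℕ × ℕ)) : Prop := (∀ p ∈ L, 1 ≤ p.2) ∧ ∀ p ∈ L.tail, 1 ≤ p.1

variable {L L' : List (ℕ × ℕ)} {w : List Bool}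

theorem IsBlockList.of_cons {p : ℕ × ℕ} (h : IsBlockList (p :: L)) : IsBlockList L :=
  ⟨fun p' hp' => h.1 p' (List.mem_cons_of_mem _ hp'),
    fun p' hp' => h.2 p' (List.mem_of_mem_tail hp')⟩

theorem IsBlockList.one_le_snd (hL : IsBlockList L) {t : ℕ} (ht : t < L.length) :
    1 ≤ L[t].2 :=
  hL.1 _ (List.getElem_mem ht)

theorem IsBlockList.one_le_fst (hL : IsBlockList L) {t : ℕ}
    (ht : t + 1 < L.length) : 1 ≤ L[t + 1].1 :=
  hL.2 _ (List.mem_iff_getElem.2 ⟨t, by simp; omega, List.getElem_tail ..⟩)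

theorem count_true_blockWord (L : List (ℕ × ℕ)) :
    (blockWord L).count true = (L.map Prod.snd).sum := by
  induction L with
  | nil => rfl
  | cons p L ih => simp [blockWord, List.count_replicate, ih]

theorem head?_blockWord (h : ∀ p ∈ L, 1 ≤ p.1) : (blockWord L).head? = some false := by
  cases L with
  | nil => rfl
  | cons p L =>
    obtain ⟨c, hc⟩ := Nat.exists_eq_add_of_le' (h p List.mem_cons_self)
    simp [blockWord, hc, List.replicate_succ]

theorem IsCodeWord.replicate_true_append (hw : IsCodeWord w) (d : ℕ) :
    IsCodeWord (List.replicate d true ++ w) := by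
  induction d with
  | zero => exact hw
  | succ d ih => exact ih.b

theorem IsCodeWord.length_pos (hw : IsCodeWord w) : 0 < w.length := by
  cases hw <;> simp

theorem IsCodeWord.replicate_false_append (hw : IsCodeWord w) (hl : 2 ≤ w.length) (c : ℕ) :
    IsCodeWord (List.replicate c false ++ w) := by
  induction c with
  | zero => exact hw
  | succ c ih => exact ih.a_cons (by simp; omega)

theorem isCodeWord_blockWord (h : ∀ p ∈ L, 1 ≤ p.2) : IsCodeWord (blockWord L) := by
  induction L with
  | nil => exact .a
  | cons p L ih =>
    have hw := ih fun p' hp' => h p' (List.mem_cons_of_mem _ hp')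
    have := hw.length_pos
    have := h p List.mem_cons_self
    rw [blockWord, List.append_assoc]
    exact (hw.replicate_true_append p.2).replicate_false_append (by simp; omega) p.1

theorem IsCodeWord.exists_blockWord (hw : IsCodeWord w) : ∃ L, IsBlockList L ∧ w = blockWord L := by
  induction hw with
  | a => exact ⟨[], ⟨by simp, by simp⟩, rfl⟩
  | @b w _ ih =>
    obtain ⟨L, hL, rfl⟩ := ih
    match L, hL with
    | [], _ => exact ⟨[(0, 1)], ⟨by simp, by simp⟩, rfl⟩
    | (0, d) :: L, hL =>
      refine ⟨(0, d + 1) :: L, ⟨?_, hL.2⟩, by simp [blockWord, List.replicate_succ]⟩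
      simpa using fun p hp => hL.1 p (List.mem_cons_of_mem _ hp)
    | (c + 1, d) :: L, hL =>
      refine ⟨(0, 1) :: (c + 1, d) :: L, ⟨?_, ?_⟩, by simp [blockWord]⟩
      · simpa using hL.1
      · simpa using hL.2
  | @a_cons w _ hl ih =>
    obtain ⟨L, hL, rfl⟩ := ih
    match L, hL with
    | [], _ => simp [blockWord] at hl
    | (c, d) :: L, hL =>
      exact ⟨(c + 1, d) :: L, ⟨by simpa using hL.1, hL.2⟩, by simp [blockWord, List.replicate_succ]⟩

theorem List.replicate_append_inj {α : Type*} {a : α} {m n : ℕ} {v w : List α}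
    (hv : v.head? ≠ some a) (hw : w.head? ≠ some a)
    (h : List.replicate m a ++ v = List.replicate n a ++ w) : m = n ∧ v = w := by
  induction m generalizing n with
  | zero =>
    cases n with
    | zero => exact ⟨rfl, h⟩
    | succ n =>
      simp only [List.replicate_zero, List.nil_append, List.replicate_succ, List.cons_append] at h
      simp [h] at hv
  | succ m ih =>
    cases n with
    | zero =>
      simp only [List.replicate_zero, List.nil_append, List.replicate_succ, List.cons_append] at h
      simp [← h] at hw
    | succ n =>
      simp only [List.replicate_succ, List.cons_append, List.cons.injEq, true_and] at h
      exact (ih h).imp (congrArg (· + 1)) id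

theorem head?_replicate_true_append {d : ℕ} (hd : 1 ≤ d) (v : List Bool) :
    (List.replicate d true ++ v).head? = some true := by
  obtain ⟨d, rfl⟩ := Nat.exists_eq_add_of_le' hd
  simp [List.replicate_succ]

theorem IsBlockList.eq_of_blockWord_eq (hL : IsBlockList L) (hL' : IsBlockList L')
    (h : blockWord L = blockWord L') : L = L' := by
  induction L generalizing L' with
  | nil =>
    cases L' with
    | nil => rfl
    | cons p' M' =>
      have := hL'.1 p' List.mem_cons_self
      have := congrArg (List.count true) h
      simp [count_true_blockWord] at this
      omega
  | cons p M ih =>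
    cases L' with
    | nil =>
      have := hL.1 p List.mem_cons_self
      have := congrArg (List.count true) h
      simp [count_true_blockWord] at this
      omega
    | cons p' M' =>
      simp only [blockWord, List.append_assoc] at h
      obtain ⟨h1, h⟩ := List.replicate_append_inj
        (by simp [head?_replicate_true_append (hL.1 p List.mem_cons_self)])
        (by simp [head?_replicate_true_append (hL'.1 p' List.mem_cons_self)]) h
      obtain ⟨h2, h⟩ := List.replicate_append_inj (by simp [head?_blockWord (L := M) hL.2])
        (by simp [head?_blockWord (L := M') hL'.2]) h
      rw [ih hL.of_cons hL'.of_cons h, Prod.ext h1 h2]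

end Words

section PartialSums

theorem List.partialSums_eq_zero_cons_tail (l : List ℕ) :
    l.partialSums = 0 :: l.partialSums.tail := by
  cases l <;> simp [List.partialSums_cons]

theorem List.tail_partialSums_cons (a : ℕ) (l : List ℕ) :
    (a :: l).partialSums.tail = a :: l.partialSums.tail.map (a + ·) := by
  rw [List.partialSums_cons, List.tail_cons, l.partialSums_eq_zero_cons_tail]
  simp

theorem List.sum_map_range {M : Type*} [AddCommMonoid M] (ℓ : ℕ → M) (n : ℕ) :
    ((List.range n).map ℓ).sum = ∑ s ∈ Finset.range n, ℓ s := by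
  induction n with
  | zero => rfl
  | succ n ih => simp [List.range_succ, Finset.sum_range_succ, ih]

theorem List.pos_of_mem_tail_partialSums {l : List ℕ} (hl : ∀ x ∈ l, 0 < x) {z : ℕ}
    (hz : z ∈ l.partialSums.tail) : 0 < z := by
  induction l generalizing z with
  | nil => simp at hz
  | cons a l ih =>
    have ha := hl a List.mem_cons_self
    rw [List.tail_partialSums_cons] at hz
    rcases List.mem_cons.1 hz with rfl | hz
    · exact ha
    · obtain ⟨y, -, rfl⟩ := List.mem_map.1 hz
      omega

theorem List.pairwise_lt_tail_partialSums {l : List ℕ} (hl : ∀ x ∈ l.tail, 0 < x) :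
    l.partialSums.tail.Pairwise (· < ·) := by
  induction l with
  | nil => simp
  | cons a l ih =>
    rw [List.tail_partialSums_cons, List.pairwise_cons, List.pairwise_map]
    refine ⟨fun y hy => ?_, (ih fun x hx => hl x (List.mem_of_mem_tail hx)).imp (by omega)⟩
    obtain ⟨z, hz, rfl⟩ := List.mem_map.1 hy
    have := List.pos_of_mem_tail_partialSums hl hz
    omega

theorem List.eq_of_tail_partialSums_eq {l l' : List ℕ}
    (h : l.partialSums.tail = l'.partialSums.tail) : l = l' := by
  induction l generalizing l' with
  | nil => cases l' <;> simp_all [List.tail_partialSums_cons]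
  | cons a l ih =>
    cases l' with
    | nil => simp [List.tail_partialSums_cons] at h
    | cons a' l' =>
      rw [List.tail_partialSums_cons, List.tail_partialSums_cons, List.cons.injEq] at h
      obtain ⟨rfl, h⟩ := h
      rw [ih ((List.map_injective_iff.2 (add_right_injective a)) h)]

theorem List.tail_partialSums_map_range (ℓ : ℕ → ℕ) (m : ℕ) :
    ((List.range m).map ℓ).partialSums.tail =
      (List.range m).map fun t => ∑ s ∈ Finset.range (t + 1), ℓ s := by
  refine List.ext_getElem (by simp) fun t h₁ h₂ => ?_
  simp only [List.getElem_tail, List.getElem_partialSums, List.getElem_map, List.getElem_range,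
    ← List.map_take, List.take_range]
  rw [min_eq_left (by simp at h₂; omega), List.sum_map_range]

end PartialSums

section Descents

variable {w v : List Bool}

theorem descSet_cons (x : Bool) (w : List Bool) :
    descSet (x :: w) = {i | i = 1 ∧ x = true ∧ w.head? = some false} ∪ (1 + ·) '' descSet w := by
  ext i
  simp only [descSet, Set.mem_union, Set.mem_ofPred_eq, Set.mem_image, List.head?_eq_getElem?]
  match i with
  | 0 => simp
  | 1 => simp
  | n + 2 =>
    constructor
    · rintro ⟨-, h1, h2⟩
      exact Or.inr ⟨n + 1, ⟨by omega, by simpa using h1, by simpa using h2⟩, by omega⟩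
    · rintro (⟨h, -⟩ | ⟨j, ⟨hj, h1, h2⟩, hj'⟩)
      · omega
      · obtain rfl : j = n + 1 := by omega
        exact ⟨by omega, by simpa using h1, by simpa using h2⟩

theorem descSet_replicate_false_append (c : ℕ) (w : List Bool) :
    descSet (List.replicate c false ++ w) = (c + ·) '' descSet w := by
  induction c with
  | zero => simp
  | succ c ih =>
    rw [List.replicate_succ, List.cons_append, descSet_cons, ih, Set.image_image]
    simp only [Bool.false_eq_true, false_and, and_false, Set.ofPred_false, Set.empty_union]
    congr 1
    funext x
    omega

theorem descSet_replicate_true_append {d : ℕ} (hd : 1 ≤ d) (hv : v.head? = some false) :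
    descSet (List.replicate d true ++ v) = insert d ((d + ·) '' descSet v) := by
  induction d, hd using Nat.le_induction with
  | base =>
    rw [List.replicate_one, List.singleton_append, descSet_cons]
    ext i
    simp [hv]
  | succ d hd ih =>
    rw [List.replicate_succ, List.cons_append, descSet_cons, ih, Set.image_insert_eq,
      Set.image_image, head?_replicate_true_append hd, add_comm 1 d]
    simp only [Option.some.injEq, Bool.true_eq_false, and_false, Set.ofPred_false,
      Set.empty_union]
    congr 2
    funext x
    omega

theorem descSet_blockWord {L : List (ℕ × ℕ)} (hL : IsBlockList L) :
    descSet (blockWord L) = {x | x ∈ (L.map fun p => p.1 + p.2).partialSums.tail} := by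
  induction L with
  | nil =>
    ext i
    rcases i with _ | _ | i <;> simp [blockWord, descSet]
  | cons p L ih =>
    rw [blockWord, List.append_assoc, descSet_replicate_false_append,
      descSet_replicate_true_append (hL.1 p List.mem_cons_self) (head?_blockWord (L := L) hL.2),
      ih hL.of_cons, Set.image_insert_eq, Set.image_image, List.map_cons,
      List.tail_partialSums_cons]
    ext x
    simp only [Set.mem_insert_iff, Set.mem_image, Set.mem_ofPred_eq, List.mem_cons, List.mem_map]
    simp [add_assoc, eq_comm]

end Descents

section Box

/-- The `t`-th block (from `0`) of `boxWord k δ i`. -/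
def boxBlock (δ i : ℕ → ℕ) : ℕ → ℕ × ℕ
  | 0 => (δ 1 - i 1, i 1)
  | t + 1 => (δ (t + 2) - i (t + 2) + 1, i (t + 2))

def boxBlocks (k : ℕ) (δ i : ℕ → ℕ) : List (ℕ × ℕ) := (List.range k).map (boxBlock δ i)

/-- The length of the `t`-th block of `boxWord k δ i` when `i` lies in the box. -/
def boxLen (δ : ℕ → ℕ) : ℕ → ℕ
  | 0 => δ 1
  | t + 1 => δ (t + 2) + 1

def InBox (k : ℕ) (δ i : ℕ → ℕ) : Prop := ∀ j, 1 ≤ j → j ≤ k → 1 ≤ i j ∧ i j ≤ δ j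

variable {k : ℕ} {δ i i' : ℕ → ℕ}

theorem blockWord_eq_flatten (L : List (ℕ × ℕ)) :
    blockWord L =
      (L.map fun p => List.replicate p.1 false ++ List.replicate p.2 true).flatten ++ [false] := by
  induction L with
  | nil => rfl
  | cons p L ih => simp [blockWord, ih]

theorem boxWord_eq_blockWord (hk : 1 ≤ k) : boxWord k δ i = blockWord (boxBlocks k δ i) := by
  obtain ⟨k, rfl⟩ := Nat.exists_eq_add_of_le' hk
  simp [boxWord, boxBlocks, blockWord_eq_flatten, List.range_succ_eq_map, boxBlock,
    Function.comp_def]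

theorem map_snd_boxBlocks : (boxBlocks k δ i).map Prod.snd = (List.range k).map (i <| · + 1) := by
  rw [boxBlocks, List.map_map]
  exact List.map_congr_left fun t _ => by cases t <;> rfl

theorem map_len_boxBlocks (hi : ∀ j, 1 ≤ j → j ≤ k → i j ≤ δ j) :
    (boxBlocks k δ i).map (fun p => p.1 + p.2) = (List.range k).map (boxLen δ) := by
  rw [boxBlocks, List.map_map]
  refine List.map_congr_left fun t ht => ?_
  rw [List.mem_range] at ht
  cases t with
  | zero =>
    have := hi 1 le_rfl (by omega)
    simp [boxBlock, boxLen]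
    omega
  | succ t =>
    have := hi (t + 2) (by omega) (by omega)
    simp [boxBlock, boxLen]
    omega

theorem isBlockList_boxBlocks (hi : ∀ j, 1 ≤ j → j ≤ k → 1 ≤ i j) :
    IsBlockList (boxBlocks k δ i) := by
  refine ⟨fun p hp => ?_, fun p hp => ?_⟩
  · obtain ⟨t, ht, rfl⟩ := List.mem_map.1 hp
    rw [List.mem_range] at ht
    cases t with
    | zero => exact hi 1 le_rfl (by omega)
    | succ t => exact hi (t + 2) (by omega) (by omega)
  · obtain ⟨n, hn, rfl⟩ := List.getElem_of_mem hp
    simp [boxBlocks, boxBlock]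

theorem eq_boxBlock_of_add_eq {p : ℕ × ℕ} {t : ℕ} (hp : p.1 + p.2 = boxLen δ t)
    (hc : t ≠ 0 → 1 ≤ p.1) (hi : i (t + 1) = p.2) : i (t + 1) ≤ δ (t + 1) ∧ p = boxBlock δ i t := by
  cases t with
  | zero =>
    simp only [boxLen, boxBlock, zero_add] at hp hi ⊢
    exact ⟨by omega, Prod.ext (by simp only; omega) hi.symm⟩
  | succ t =>
    have := hc t.succ_ne_zero
    simp only [boxLen, boxBlock] at hp hi ⊢
    rw [show t + 1 + 1 = t + 2 by rfl] at hi ⊢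
    exact ⟨by omega, Prod.ext (by simp only; omega) hi.symm⟩

theorem exists_eq_boxBlocks {L : List (ℕ × ℕ)} (hL : IsBlockList L)
    (h : L.map (fun p => p.1 + p.2) = (List.range k).map (boxLen δ)) :
    ∃ i, InBox k δ i ∧ L = boxBlocks k δ i := by
  have hlen : L.length = k := by simpa using congrArg List.length h
  set i : ℕ → ℕ := fun j => (L.getD (j - 1) (0, 0)).2
  have key : ∀ t (ht : t < L.length), i (t + 1) ≤ δ (t + 1) ∧ L[t] = boxBlock δ i t := by
    intro t ht
    refine eq_boxBlock_of_add_eq (by simpa [ht, hlen ▸ ht] using congrArg (·[t]?) h)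
      (fun h0 => ?_) (by simp only [i, Nat.add_sub_cancel, List.getD_eq_getElem _ _ ht])
    obtain ⟨t, rfl⟩ := Nat.exists_eq_succ_of_ne_zero h0
    exact hL.one_le_fst ht
  refine ⟨i, fun j hj1 hjk => ?_, List.ext_getElem (by simp [boxBlocks, hlen]) fun t h₁ _ => ?_⟩
  · obtain ⟨t, rfl⟩ : ∃ t, j = t + 1 := ⟨j - 1, by omega⟩
    have hi : i (t + 1) = L[t].2 := by
      simp only [i, Nat.add_sub_cancel, List.getD_eq_getElem _ _ (show t < L.length by omega)]
    exact ⟨hi ▸ hL.one_le_snd _, (key t (by omega)).1⟩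
  · simpa [boxBlocks] using (key t h₁).2

theorem boxWord_congr (hk : 1 ≤ k) (h : ∀ j, 1 ≤ j → j ≤ k → i j = i' j) :
    boxWord k δ i = boxWord k δ i' := by
  rw [boxWord_eq_blockWord hk, boxWord_eq_blockWord hk, boxBlocks, boxBlocks]
  refine congrArg _ (List.map_congr_left fun t ht => ?_)
  rw [List.mem_range] at ht
  cases t with
  | zero => simp [boxBlock, h 1 le_rfl hk]
  | succ t => simp [boxBlock, h (t + 2) (by omega) (by omega)]

theorem eq_of_boxWord_eq (hk : 1 ≤ k) (hi : ∀ j, 1 ≤ j → j ≤ k → 1 ≤ i j)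
    (hi' : ∀ j, 1 ≤ j → j ≤ k → 1 ≤ i' j) (h : boxWord k δ i = boxWord k δ i') :
    ∀ j, 1 ≤ j → j ≤ k → i j = i' j := by
  rw [boxWord_eq_blockWord hk, boxWord_eq_blockWord hk] at h
  have h' := congrArg (List.map Prod.snd)
    ((isBlockList_boxBlocks hi).eq_of_blockWord_eq (isBlockList_boxBlocks hi') h)
  rw [map_snd_boxBlocks, map_snd_boxBlocks, List.map_inj_left] at h'
  intro j hj1 hjk
  simpa [Nat.sub_add_cancel hj1] using h' (j - 1) (List.mem_range.2 (by omega))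

theorem sum_range_boxLen {q : ℕ → ℕ} (hδ1 : δ 1 = q k)
    (hδ : ∀ j, 2 ≤ j → j ≤ k → δ j = q (k - j + 1) - q (k - j + 2) - 1)
    (hlt : ∀ j, 1 ≤ j → j < k → q (j + 1) < q j) {t : ℕ} (ht : t < k) :
    ∑ s ∈ Finset.range (t + 1), boxLen δ s = q (k - t) := by
  induction t with
  | zero => simp [boxLen, hδ1]
  | succ t ih =>
    rw [Finset.sum_range_succ, ih (by omega)]
    have h1 := hδ (t + 2) (by omega) (by omega)
    have h2 := hlt (k - t - 1) (by omega) (by omega)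
    rw [show k - (t + 2) + 1 = k - t - 1 by omega, show k - (t + 2) + 2 = k - t by omega] at h1
    rw [show k - t - 1 + 1 = k - t by omega] at h2
    simp only [boxLen]
    rw [show k - (t + 1) = k - t - 1 by omega]
    omega

theorem mem_tail_partialSums_boxLen {q : ℕ → ℕ} (hδ1 : δ 1 = q k)
    (hδ : ∀ j, 2 ≤ j → j ≤ k → δ j = q (k - j + 1) - q (k - j + 2) - 1)
    (hlt : ∀ j, 1 ≤ j → j < k → q (j + 1) < q j) {x : ℕ} :
    x ∈ ((List.range k).map (boxLen δ)).partialSums.tail ↔ ∃ j, 1 ≤ j ∧ j ≤ k ∧ x = q j := by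
  rw [List.tail_partialSums_map_range, List.mem_map]
  constructor
  · rintro ⟨t, ht, rfl⟩
    rw [List.mem_range] at ht
    exact ⟨k - t, by omega, by omega, sum_range_boxLen hδ1 hδ hlt ht⟩
  · rintro ⟨j, hj1, hjk, rfl⟩
    refine ⟨k - j, List.mem_range.2 (by omega), ?_⟩
    rw [sum_range_boxLen hδ1 hδ hlt (by omega), Nat.sub_sub_self hjk]

theorem descSet_eq_iff_exists_boxWord {q : ℕ → ℕ} (hk : 1 ≤ k) (hδ1 : δ 1 = q k)
    (hδ : ∀ j, 2 ≤ j → j ≤ k → δ j = q (k - j + 1) - q (k - j + 2) - 1)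
    (hlt : ∀ j, 1 ≤ j → j < k → q (j + 1) < q j) {w : List Bool} (hw : IsCodeWord w) :
    descSet w = {x | ∃ j, 1 ≤ j ∧ j ≤ k ∧ x = q j} ↔ ∃ i, InBox k δ i ∧ w = boxWord k δ i := by
  have hQ : {x | ∃ j, 1 ≤ j ∧ j ≤ k ∧ x = q j} =
      {x | x ∈ ((List.range k).map (boxLen δ)).partialSums.tail} := by
    ext x
    exact (mem_tail_partialSums_boxLen hδ1 hδ hlt).symm
  rw [hQ]
  constructor
  · intro h
    obtain ⟨L, hL, rfl⟩ := hw.exists_blockWord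
    rw [descSet_blockWord hL, Set.ext_iff] at h
    have hsorted := List.pairwise_lt_tail_partialSums (l := L.map fun p => p.1 + p.2)
      fun x hx => by
        obtain ⟨p, hp, rfl⟩ := List.mem_map.1 (List.mem_of_mem_tail hx)
        have := hL.1 p hp
        omega
    have hsorted' := List.pairwise_lt_tail_partialSums (l := (List.range k).map (boxLen δ))
      fun x hx => by
        simp only [← List.map_tail, List.tail_range, List.mem_map, List.mem_range'_1] at hx
        obtain ⟨_ | t, ht, rfl⟩ := hx
        · omega
        · exact Nat.succ_pos _
    obtain ⟨i, hi, rfl⟩ :=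
      exists_eq_boxBlocks hL (List.eq_of_tail_partialSums_eq (hsorted.eq_of_mem_iff hsorted' h))
    exact ⟨i, hi, (boxWord_eq_blockWord hk).symm⟩
  · rintro ⟨i, hi, rfl⟩
    rw [boxWord_eq_blockWord hk,
      descSet_blockWord (isBlockList_boxBlocks fun j hj1 hjk => (hi j hj1 hjk).1),
      map_len_boxBlocks fun j hj1 hjk => (hi j hj1 hjk).2]

end Box

section Partitions

variable {k : ℕ} {q δ : ℕ → ℕ} {f : ℕ → ℕ}

theorem desSet_eq_iff_exists_boxWord (hk : 1 ≤ k) (hδ1 : δ 1 = q k)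
    (hδ : ∀ j, 2 ≤ j → j ≤ k → δ j = q (k - j + 1) - q (k - j + 2) - 1)
    (hlt : ∀ j, 1 ≤ j → j < k → q (j + 1) < q j) (hf : IsFreq f) :
    DesSet f = {x | ∃ j, 1 ≤ j ∧ j ≤ k ∧ x = q j} ↔
      ∃ i, InBox k δ i ∧ burgeCode f = boxWord k δ i :=
  descSet_eq_iff_exists_boxWord hk hδ1 hδ hlt (isCodeWord_burgeCode hf)

theorem flen_eq_sum_of_burgeCode_eq_boxWord {i : ℕ → ℕ} (hk : 1 ≤ k) (hf : IsFreq f)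
    (h : burgeCode f = boxWord k δ i) : flen f = ∑ j ∈ Finset.Icc 1 k, i j := by
  rw [flen_eq_count_burgeCode hf, h, boxWord_eq_blockWord hk, count_true_blockWord,
    map_snd_boxBlocks, List.sum_map_range, Finset.range_eq_Ico, Finset.sum_Ico_add' i 0 k 1,
    zero_add, Finset.Ico_add_one_right_eq_Icc]

def boxExtend (k : ℕ) (g : ∀ j ∈ Finset.Icc 1 k, ℕ) (j : ℕ) : ℕ :=
  if h : j ∈ Finset.Icc 1 k then g j h else 0

theorem inBox_boxExtend {g : ∀ j ∈ Finset.Icc 1 k, ℕ}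
    (hg : g ∈ (Finset.Icc 1 k).pi fun j => Finset.Icc 1 (δ j)) : InBox k δ (boxExtend k g) :=
  fun j hj1 hjk => by
    have hj : j ∈ Finset.Icc 1 k := Finset.mem_Icc.2 ⟨hj1, hjk⟩
    simpa [boxExtend, hj] using Finset.mem_pi.1 hg j hj

theorem ncard_setOf_desSet_eq (hk : 1 ≤ k) (hδ1 : δ 1 = q k)
    (hδ : ∀ j, 2 ≤ j → j ≤ k → δ j = q (k - j + 1) - q (k - j + 2) - 1)
    (hlt : ∀ j, 1 ≤ j → j < k → q (j + 1) < q j) :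
    {f : ℕ → ℕ | IsFreq f ∧ DesSet f = {x | ∃ j, 1 ≤ j ∧ j ≤ k ∧ x = q j}}.ncard
      = ∏ j ∈ Finset.Icc 1 k, δ j := by
  set B := (Finset.Icc 1 k).pi fun j => Finset.Icc 1 (δ j)
  set Φ : (∀ j ∈ Finset.Icc 1 k, ℕ) → ℕ → ℕ := fun g => burgeDecode (boxWord k δ (boxExtend k g))
  have hcode : ∀ g ∈ B, burgeCode (Φ g) = boxWord k δ (boxExtend k g) := fun g hg =>
    burgeCode_burgeDecode <| boxWord_eq_blockWord hk ▸ isCodeWord_blockWord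
      (isBlockList_boxBlocks fun j h1 h2 => (inBox_boxExtend hg j h1 h2).1).1
  have hset : {f | IsFreq f ∧ DesSet f = {x | ∃ j, 1 ≤ j ∧ j ≤ k ∧ x = q j}} = Φ '' B := by
    ext f
    constructor
    · rintro ⟨hf, hdes⟩
      obtain ⟨i, hi, hfi⟩ := (desSet_eq_iff_exists_boxWord hk hδ1 hδ hlt hf).1 hdes
      refine ⟨fun j _ => i j, Finset.mem_pi.2 fun j hj => ?_, ?_⟩
      · obtain ⟨h1, h2⟩ := Finset.mem_Icc.1 hj
        exact Finset.mem_Icc.2 (hi j h1 h2)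
      · rw [← burgeDecode_burgeCode hf, hfi]
        exact congrArg _ (boxWord_congr hk fun j h1 h2 => by simp [boxExtend, h1, h2])
    · rintro ⟨g, hg, rfl⟩
      exact ⟨isFreq_burgeDecode _, (desSet_eq_iff_exists_boxWord hk hδ1 hδ hlt
        (isFreq_burgeDecode _)).2 ⟨_, inBox_boxExtend hg, hcode g hg⟩⟩
  have hinj : Set.InjOn Φ B := fun g hg g' hg' h => by
    have := eq_of_boxWord_eq hk (fun j h1 h2 => (inBox_boxExtend hg j h1 h2).1)
      (fun j h1 h2 => (inBox_boxExtend hg' j h1 h2).1)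
      (by rw [← hcode g hg, ← hcode g' hg', h])
    funext j hj
    obtain ⟨h1, h2⟩ := Finset.mem_Icc.1 hj
    simpa [boxExtend, hj] using this j h1 h2
  rw [hset, hinj.ncard_image, Set.ncard_coe_finset, Finset.card_pi]
  exact Finset.prod_congr rfl fun j _ => by simp

end Partitions

theorem stmt15_general (k : ℕ) (hk : 1 ≤ k) (q : ℕ → ℕ)
    (hgap : ∀ j, 1 ≤ j → j < k → q (j + 1) + 2 ≤ q j)
    (δ : ℕ → ℕ) (hδ1 : δ 1 = q k)
    (hδ : ∀ j, 2 ≤ j → j ≤ k → δ j = q (k - j + 1) - q (k - j + 2) - 1) :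
    (∀ f : ℕ → ℕ, IsFreq f →
      (DesSet f = {x | ∃ j, 1 ≤ j ∧ j ≤ k ∧ x = q j} ↔
        ∃ i : ℕ → ℕ, (∀ j, 1 ≤ j → j ≤ k → 1 ≤ i j ∧ i j ≤ δ j) ∧
          burgeCode f = boxWord k δ i)) ∧
    (∀ i : ℕ → ℕ, (∀ j, 1 ≤ j → j ≤ k → 1 ≤ i j ∧ i j ≤ δ j) →
      ∀ f : ℕ → ℕ, IsFreq f → burgeCode f = boxWord k δ i →
        flen f = ∑ j ∈ Finset.Icc 1 k, i j) ∧
    {f : ℕ → ℕ | IsFreq f ∧ DesSet f = {x | ∃ j, 1 ≤ j ∧ j ≤ k ∧ x = q j}}.ncard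
      = ∏ j ∈ Finset.Icc 1 k, δ j := by
  have hlt : ∀ j, 1 ≤ j → j < k → q (j + 1) < q j := fun j h1 h2 => by
    have := hgap j h1 h2
    omega
  exact ⟨fun f hf => desSet_eq_iff_exists_boxWord hk hδ1 hδ hlt hf,
    fun i _ f hf h => flen_eq_sum_of_burgeCode_eq_boxWord hk hf h,
    ncard_setOf_desSet_eq hk hδ1 hδ hlt⟩

/-- box parametrization: for super-distinct `Q = (q₁ > ⋯ > q_k)`
with `δ₁ = q_k`, `δ_i = q_{k-i+1} - q_{k-i+2} - 1`, the partitions with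
`Des(P) = Q` are exactly those whose Burge code is a box word with
`(i₁,…,i_k) ∈ [1,δ₁] × ⋯ × [1,δ_k]`; such a partition has `i₁ + ⋯ + i_k`
parts, and `|Des⁻¹(Q)| = δ₁⋯δ_k`. -/
theorem stmt15 (k : ℕ) (hk : 1 ≤ k) (q : ℕ → ℕ)
    (hq1 : 1 ≤ q k) (hgap : ∀ j, 1 ≤ j → j < k → q (j + 1) + 2 ≤ q j)
    (δ : ℕ → ℕ) (hδ1 : δ 1 = q k)
    (hδ : ∀ j, 2 ≤ j → j ≤ k → δ j = q (k - j + 1) - q (k - j + 2) - 1) :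
    (∀ f : ℕ → ℕ, IsFreq f →
      (DesSet f = {x | ∃ j, 1 ≤ j ∧ j ≤ k ∧ x = q j} ↔
        ∃ i : ℕ → ℕ, (∀ j, 1 ≤ j → j ≤ k → 1 ≤ i j ∧ i j ≤ δ j) ∧
          burgeCode f = boxWord k δ i)) ∧
    (∀ i : ℕ → ℕ, (∀ j, 1 ≤ j → j ≤ k → 1 ≤ i j ∧ i j ≤ δ j) →
      ∀ f : ℕ → ℕ, IsFreq f → burgeCode f = boxWord k δ i →
        flen f = ∑ j ∈ Finset.Icc 1 k, i j) ∧
    {f : ℕ → ℕ | IsFreq f ∧ DesSet f = {x | ∃ j, 1 ≤ j ∧ j ≤ k ∧ x = q j}}.ncard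
      = ∏ j ∈ Finset.Icc 1 k, δ j :=
  stmt15_general k hk q hgap δ hδ1 hδ
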